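/- arXiv:2210.17513 — 6 statements merged into one kernel-verified Lean document; each statement's English description precedes it below -/
import Mathlib

section
/- If Φ is a positive trace-preserving linear map on the space of d×d complex matrices (d finite), then 1 is an eigenvalue of Φ. -/
open Matrix
open scoped ComplexOrder

/-- The algebra of `d × d` complex matrices. -/
abbrev Mat (d : ℕ) := Matrix (Fin d) (Fin d) ℂ

/-- A linear map on matrices is positive if it maps positive semidefinite matrices to
positive semidefinite matrices. -/
def IsPositiveMap {d : ℕ} (Φ : Module.End ℂ (Mat d)) : Prop :=
  ∀ X : Mat d, X.PosSemidef → (Φ X).PosSemidef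

/-- A linear map on matrices is trace-preserving. -/
def IsTracePreserving {d : ℕ} (Φ : Module.End ℂ (Mat d)) : Prop :=
  ∀ X : Mat d, (Φ X).trace = X.trace

/-- A positive trace-preserving linear map on `d × d` complex matrices
(`d ≥ 1`) has `1` as an eigenvalue. -/
theorem positive_tracePreserving_hasEigenvalue_one
    (d : ℕ) (hd : 1 ≤ d) (Φ : Module.End ℂ (Mat d))
    (hpos : IsPositiveMap Φ) (htp : IsTracePreserving Φ) :
    Module.End.HasEigenvalue Φ (1 : ℂ) := by
  have hsurj : ¬ Function.Surjective (Φ - 1 : Module.End ℂ (Mat d)) := by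
    intro h
    obtain ⟨X, hX⟩ := h (1 : Mat d)
    have h0 : ((Φ - 1 : Module.End ℂ (Mat d)) X).trace = 0 := by
      simp [LinearMap.sub_apply, Matrix.trace_sub, htp X]
    rw [hX, Matrix.trace_one] at h0
    have : (d : ℂ) ≠ 0 := by
      exact_mod_cast Nat.cast_ne_zero.mpr (by omega)
    simp [Finset.card_univ] at h0
    exact this (by exact_mod_cast h0)
  have hinj : ¬ Function.Injective (Φ - 1 : Module.End ℂ (Mat d)) := fun h =>
    hsurj ((LinearMap.injective_iff_surjective).mp h)
  rw [Function.not_injective_iff] at hinj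
  obtain ⟨a, b, hab, hne⟩ := hinj
  refine Module.End.hasEigenvalue_of_hasEigenvector (x := a - b) ⟨?_, sub_ne_zero.mpr hne⟩
  rw [Module.End.mem_eigenspace_iff]
  have : Φ a - a = Φ b - b := by
    simpa [LinearMap.sub_apply] using hab
  rw [one_smul, map_sub]
  linear_combination (norm := abel) this
end

section
/- Let Φ be a quantum channel on d×d matrices. The Cesàro means (1/N) ∑_{n=1}^{N} Φⁿ converge as N → ∞ to a linear map 𝒫 which is a projection (𝒫² = 𝒫) onto the fixed-point space of Φ, satisfying Φ ∘ 𝒫 = 𝒫 ∘ Φ = 𝒫. -/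
/-!
A positive trace-preserving map sends a positive semidefinite matrix to one with the same trace,
and the trace of a positive semidefinite matrix `Bᴴ B` bounds its Frobenius norm. Positive
semidefinite matrices span all matrices, so every orbit `Φⁿ X` is bounded and `Φⁿ X / n → 0`.

In finite dimension this sublinear growth is all the mean ergodic theorem needs. A fixed point of
the form `Φ y - y` equals its own Cesàro mean `(Φᴺ⁺¹ y - Φ y) / N`, hence vanishes, so by
rank–nullity the space splits as `ker (Φ - 1) ⊕ range (Φ - 1)`. The Cesàro means fix the first
summand and tend to zero on the second, so they converge to the projection along this splitting.
-/

open Matrix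
open scoped ComplexOrder

/-- The block-wise application `(Φ ⊗ id_n)(X)` of `Φ` to a matrix on `ℂ^d ⊗ ℂ^n`. -/
def blockApply {d : ℕ} (Φ : Module.End ℂ (Mat d)) (n : ℕ)
    (X : Matrix (Fin d × Fin n) (Fin d × Fin n) ℂ) :
    Matrix (Fin d × Fin n) (Fin d × Fin n) ℂ :=
  Matrix.of fun p q => Φ (Matrix.of fun i j => X (i, p.2) (j, q.2)) p.1 q.1

/-- Complete positivity: `Φ ⊗ id_n` is positive for every `n`. -/
def IsCompletelyPositive {d : ℕ} (Φ : Module.End ℂ (Mat d)) : Prop :=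
  ∀ (n : ℕ) (X : Matrix (Fin d × Fin n) (Fin d × Fin n) ℂ),
    X.PosSemidef → (blockApply Φ n X).PosSemidef

/-- The attractor (peripheral) subspace: the span of eigenvectors corresponding to
eigenvalues of modulus one. -/
noncomputable def attrSubspace {d : ℕ} (Φ : Module.End ℂ (Mat d)) : Submodule ℂ (Mat d) :=
  ⨆ (μ : ℂ) (_ : ‖μ‖ = 1), Module.End.eigenspace Φ μ

open Filter Topology Finset

namespace Module.End

section Algebra

variable {R E : Type*} [CommRing R] [AddCommGroup E] [Module R E]

lemma sum_Icc_pow_apply_of_apply_eq {f : Module.End R E} {x : E} (hx : f x = x) (N : ℕ) :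
    (∑ n ∈ Icc 1 N, f ^ n) x = N • x := by
  simp [LinearMap.sum_apply, pow_apply, Function.iterate_fixed hx]

lemma sum_Icc_pow_apply_sub_self (f : Module.End R E) (y : E) (N : ℕ) :
    (∑ n ∈ Icc 1 N, f ^ n) (f y - y) = (f ^ N) (f y) - f y := by
  have hterm (n : ℕ) : (f ^ n) (f y - y) = (f ^ (n + 1)) y - (f ^ n) y := by
    rw [map_sub, pow_succ, mul_apply]
  rw [LinearMap.sum_apply, ← Ico_add_one_right_eq_Icc, sum_congr rfl fun n _ => hterm n,
    sum_Ico_sub (fun n => (f ^ n) y) (by omega), pow_succ, mul_apply, pow_one]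

end Algebra

variable {𝕜 E : Type*} [RCLike 𝕜] [AddCommGroup E] [Module 𝕜 E]

-- Unlike `birkhoffAverage`, this averages `f, …, f ^ N` rather than `1, …, f ^ (N - 1)`.
def cesaroMean (f : Module.End 𝕜 E) (N : ℕ) : Module.End 𝕜 E :=
  (N : 𝕜)⁻¹ • ∑ n ∈ Icc 1 N, f ^ n

lemma cesaroMean_apply_of_apply_eq {f : Module.End 𝕜 E} {x : E} (hx : f x = x) {N : ℕ}
    (hN : N ≠ 0) : cesaroMean f N x = x := by
  rw [cesaroMean, LinearMap.smul_apply, sum_Icc_pow_apply_of_apply_eq hx,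
    ← Nat.cast_smul_eq_nsmul 𝕜, inv_smul_smul₀ (Nat.cast_ne_zero.mpr hN)]

variable [TopologicalSpace E] [IsTopologicalAddGroup E] [ContinuousSMul 𝕜 E]
  {f : Module.End 𝕜 E}

lemma tendsto_cesaroMean_apply_sub_self
    (hf : ∀ x, Tendsto (fun N : ℕ => (N : 𝕜)⁻¹ • (f ^ N) x) atTop (𝓝 0)) (y : E) :
    Tendsto (fun N => cesaroMean f N (f y - y)) atTop (𝓝 0) := by
  have h := (hf (f y)).sub ((tendsto_inv_atTop_nhds_zero_nat (𝕜 := 𝕜)).smul_const (f y))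
  rw [zero_smul, sub_zero] at h
  simpa only [cesaroMean, LinearMap.smul_apply, sum_Icc_pow_apply_sub_self, smul_sub] using h

lemma disjoint_eigenspace_one_range_sub_one [T2Space E]
    (hf : ∀ x, Tendsto (fun N : ℕ => (N : 𝕜)⁻¹ • (f ^ N) x) atTop (𝓝 0)) :
    Disjoint (f.eigenspace 1) (LinearMap.range (f - 1)) := by
  rw [Submodule.disjoint_def]
  rintro _ hx ⟨y, rfl⟩
  rw [mem_eigenspace_iff, one_smul] at hx
  refine tendsto_nhds_unique (tendsto_const_nhds.congr' ?_)
    (tendsto_cesaroMean_apply_sub_self hf y)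
  filter_upwards [eventually_ne_atTop 0] with N hN
  exact (cesaroMean_apply_of_apply_eq hx hN).symm

lemma isCompl_eigenspace_one_range_sub_one [T2Space E] [FiniteDimensional 𝕜 E]
    (hf : ∀ x, Tendsto (fun N : ℕ => (N : 𝕜)⁻¹ • (f ^ N) x) atTop (𝓝 0)) :
    IsCompl (f.eigenspace 1) (LinearMap.range (f - 1)) := by
  refine (Submodule.isCompl_iff_disjoint _ _ ?_).mpr (disjoint_eigenspace_one_range_sub_one hf)
  rw [eigenspace_def, one_smul, add_comm, LinearMap.finrank_range_add_finrank_ker]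

lemma tendsto_cesaroMean_projection
    (hf : ∀ x, Tendsto (fun N : ℕ => (N : 𝕜)⁻¹ • (f ^ N) x) atTop (𝓝 0))
    (hc : IsCompl (f.eigenspace 1) (LinearMap.range (f - 1))) (x : E) :
    Tendsto (fun N => cesaroMean f N x) atTop (𝓝 ((f.eigenspace 1).projection _ hc x)) := by
  set P := (f.eigenspace 1).projection _ hc
  obtain ⟨y, hy⟩ : x - P x ∈ LinearMap.range (f - 1) := Submodule.sub_projection_mem hc x
  have hPx : f (P x) = P x := by
    simpa only [mem_eigenspace_iff, one_smul] using Submodule.projection_apply_mem hc x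
  have h : Tendsto (fun N => P x + cesaroMean f N (f y - y)) atTop (𝓝 (P x + 0)) :=
    tendsto_const_nhds.add (tendsto_cesaroMean_apply_sub_self hf y)
  rw [add_zero] at h
  refine h.congr' ?_
  filter_upwards [eventually_ne_atTop 0] with N hN
  rw [← cesaroMean_apply_of_apply_eq hPx hN, ← map_add, show f y - y = x - P x from hy,
    add_sub_cancel]

theorem exists_tendsto_cesaroMean_projection_eigenspace_one [T2Space E] [FiniteDimensional 𝕜 E]
    (hf : ∀ x, Tendsto (fun N : ℕ => (N : 𝕜)⁻¹ • (f ^ N) x) atTop (𝓝 0)) :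
    ∃ P : Module.End 𝕜 E, (∀ x, Tendsto (fun N => cesaroMean f N x) atTop (𝓝 (P x))) ∧
      P ∘ₗ P = P ∧ LinearMap.range P = f.eigenspace 1 ∧ f ∘ₗ P = P ∧ P ∘ₗ f = P := by
  have hc := isCompl_eigenspace_one_range_sub_one hf
  refine ⟨_, tendsto_cesaroMean_projection hf hc, Submodule.isIdempotentElem_projection hc,
    Submodule.range_projection hc, LinearMap.ext fun x => ?_, LinearMap.ext fun x => ?_⟩
  · simpa only [LinearMap.comp_apply, mem_eigenspace_iff, one_smul]
      using Submodule.projection_apply_mem hc x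
  · rw [LinearMap.comp_apply, ← sub_eq_zero, ← map_sub]
    exact Submodule.projection_apply_of_mem_right hc ⟨x, rfl⟩

end Module.End

lemma Matrix.span_posSemidef_eq_top (n : Type*) [Fintype n] [DecidableEq n] :
    Submodule.span ℂ {A : Matrix n n ℂ | A.PosSemidef} = ⊤ := by
  open scoped MatrixOrder in
  simpa only [nonneg_iff_posSemidef] using CStarAlgebra.span_nonneg (A := Matrix n n ℂ)

section Frobenius

open scoped Matrix.Norms.Frobenius

variable {𝕜 m n : Type*} [RCLike 𝕜] [Fintype m] [Fintype n]

lemma Matrix.frobenius_norm_sq_eq_re_trace (B : Matrix m n 𝕜) :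
    ‖B‖ ^ 2 = RCLike.re (Bᴴ * B).trace := by
  rw [frobenius_norm_def, ← Real.rpow_two, ← Real.rpow_mul (by positivity),
    one_div_mul_cancel two_ne_zero, Real.rpow_one]
  simp only [Real.rpow_two, trace, diag, mul_apply, conjTranspose_apply, map_sum,
    RCLike.star_def, RCLike.conj_mul, ← RCLike.ofReal_pow, RCLike.ofReal_re]
  exact Finset.sum_comm

lemma Matrix.PosSemidef.frobenius_norm_le_re_trace {A : Matrix n n 𝕜} (hA : A.PosSemidef) :
    ‖A‖ ≤ RCLike.re A.trace := by
  classical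
  obtain ⟨B, rfl⟩ : ∃ B : Matrix n n 𝕜, A = Bᴴ * B := by
    open scoped MatrixOrder in
    simpa only [star_eq_conjTranspose] using CStarAlgebra.nonneg_iff_eq_star_mul_self.mp hA.nonneg
  calc ‖Bᴴ * B‖ ≤ ‖Bᴴ‖ * ‖B‖ := frobenius_norm_mul _ _
    _ = RCLike.re (Bᴴ * B).trace := by
      rw [frobenius_norm_conjTranspose, ← sq, frobenius_norm_sq_eq_re_trace]

variable {d : ℕ} {Φ : Module.End ℂ (Mat d)}

-- `Φ ⊗ id₁` is `Φ` up to reindexing `Fin d ≃ Fin d × Fin 1`.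
lemma IsCompletelyPositive.isPositiveMap (hΦ : IsCompletelyPositive Φ) : IsPositiveMap Φ :=
  fun X hX => (hΦ 1 (X.submatrix Prod.fst Prod.fst) (hX.submatrix _)).submatrix fun i => (i, 0)

lemma IsPositiveMap.pow (hΦ : IsPositiveMap Φ) (n : ℕ) : IsPositiveMap (Φ ^ n) := by
  induction n with
  | zero => exact fun X hX => hX
  | succ n ih => exact fun X hX => ih _ (hΦ X hX)

lemma IsTracePreserving.pow (hΦ : IsTracePreserving Φ) (n : ℕ) : IsTracePreserving (Φ ^ n) := by
  induction n with
  | zero => exact fun X => rfl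
  | succ n ih => exact fun X => (ih _).trans (hΦ X)

lemma IsPositiveMap.exists_norm_pow_apply_le (hP : IsPositiveMap Φ) (hT : IsTracePreserving Φ)
    (X : Mat d) : ∃ C, ∀ n, ‖(Φ ^ n) X‖ ≤ C := by
  have hX : X ∈ Submodule.span ℂ {A : Mat d | A.PosSemidef} := by
    rw [span_posSemidef_eq_top]
    trivial
  induction hX using Submodule.span_induction with
  | mem A hA =>
    refine ⟨A.trace.re, fun n => ?_⟩
    rw [← (hT.pow n) A]
    exact ((hP.pow n) A hA).frobenius_norm_le_re_trace
  | zero => exact ⟨0, fun n => by simp⟩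
  | add A B _ _ hA hB =>
    obtain ⟨C, hC⟩ := hA
    obtain ⟨D, hD⟩ := hB
    refine ⟨C + D, fun n => ?_⟩
    rw [map_add]
    exact (norm_add_le _ _).trans (add_le_add (hC n) (hD n))
  | smul c A _ hA =>
    obtain ⟨C, hC⟩ := hA
    refine ⟨‖c‖ * C, fun n => ?_⟩
    rw [map_smul, norm_smul]
    exact mul_le_mul_of_nonneg_left (hC n) (norm_nonneg c)

-- The Frobenius norm induces the product topology, so this is the entrywise limit of the statement.
lemma IsPositiveMap.tendsto_inv_smul_pow_apply (hP : IsPositiveMap Φ) (hT : IsTracePreserving Φ)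
    (X : Mat d) : Tendsto (fun N : ℕ => (N : ℂ)⁻¹ • (Φ ^ N) X) atTop (𝓝 0) := by
  obtain ⟨C, hC⟩ := hP.exists_norm_pow_apply_le hT X
  exact tendsto_inv_atTop_nhds_zero_nat.zero_smul_isBoundedUnder_le (isBoundedUnder_of ⟨C, hC⟩)

end Frobenius

/-- For a quantum channel `Φ`, the Cesàro means `(1/N) ∑_{n=1}^N Φ^n`
converge (pointwise, in the finite-dimensional space of matrices) to a linear map `P`
which is a projection onto the fixed-point space of `Φ`, and `Φ ∘ P = P ∘ Φ = P`. -/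
theorem cesaro_limit_projection_onto_fixedPoints
    (d : ℕ) (Φ : Module.End ℂ (Mat d))
    (hCP : IsCompletelyPositive Φ) (hTP : IsTracePreserving Φ) :
    ∃ P : Module.End ℂ (Mat d),
      (∀ X : Mat d,
        Filter.Tendsto (fun N : ℕ => (N : ℂ)⁻¹ • (∑ n ∈ Finset.Icc 1 N, Φ ^ n) X)
          Filter.atTop (nhds (P X))) ∧
      P ∘ₗ P = P ∧
      LinearMap.range P = Module.End.eigenspace Φ 1 ∧
      Φ ∘ₗ P = P ∧ P ∘ₗ Φ = P :=
  Module.End.exists_tendsto_cesaroMean_projection_eigenspace_one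
    (hCP.isPositiveMap.tendsto_inv_smul_pow_apply hTP)
end

section
/- Let Φ and Φₙ be quantum channels with Φ = Φₙⁿ. Then spec(Φ) = {μⁿ : μ ∈ spec(Φₙ)}, and the peripheral eigenprojection of Φ equals the peripheral eigenprojection of Φₙ; in particular Attr(Φ) = Attr(Φₙ). -/
open Matrix
open scoped ComplexOrder

/-- The peripheral eigenprojection of `Φ`: the spectral projection whose range is the
attractor subspace and whose kernel is the sum of the generalized eigenspaces for the
non-peripheral eigenvalues. -/
def IsPeriphProj {d : ℕ} (Φ Q : Module.End ℂ (Mat d)) : Prop :=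
  Q ∘ₗ Q = Q ∧
  LinearMap.range Q = attrSubspace Φ ∧
  LinearMap.ker Q =
    ⨆ (μ : ℂ) (_ : ‖μ‖ ≠ 1), Module.End.maxGenEigenspace Φ μ

/-! Since `X - μ` divides `Xⁿ - μⁿ`, the generalized `μ`-eigenspace of `f` lies in the generalized
`μⁿ`-eigenspace of `fⁿ`; decomposing the latter into generalized eigenspaces of `f` (which
commutes with `fⁿ`) and using the independence of generalized eigenspaces of `fⁿ` shows that it is
exactly the sum over the `n`-th roots `μ` of `μⁿ`. For `ν ≠ 0`, `f` restricted to the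
`ν`-eigenspace of `fⁿ` is killed by the separable polynomial `Xⁿ - ν`, hence semisimple, so the
same holds for honest eigenspaces. As `‖μⁿ‖ = 1 ↔ ‖μ‖ = 1`, both the range and the kernel
prescribed for the peripheral projection are the same for `Φ = Φₙⁿ` and `Φₙ`. -/

open Polynomial

namespace Module.End

lemma genEigenspace_le_genEigenspace_pow {R M : Type*} [CommRing R] [AddCommGroup M]
    [Module R M] (f : End R M) (μ : R) (k : ℕ∞) (n : ℕ) :
    f.genEigenspace μ k ≤ (f ^ n).genEigenspace (μ ^ n) k := by
  intro x hx
  obtain ⟨l, hlk, hx⟩ := mem_genEigenspace.mp hx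
  obtain ⟨q, hq⟩ : (X - C μ) ^ l ∣ (X ^ n - C (μ ^ n)) ^ l :=
    pow_dvd_pow_of_dvd (dvd_iff_isRoot.mpr (by simp)) l
  have hfactor : (f ^ n - μ ^ n • 1) ^ l = aeval f q * (f - μ • 1) ^ l := by
    simpa [mul_comm, Algebra.algebraMap_eq_smul_one, _root_.smul_pow] using congrArg (aeval f) hq
  refine mem_genEigenspace.mpr ⟨l, hlk, ?_⟩
  rw [LinearMap.mem_ker] at hx ⊢
  rw [hfactor, mul_apply, hx, map_zero]

section Field

variable {K V : Type*} [Field K] [AddCommGroup V] [Module K V]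

lemma inf_maxGenEigenspace_le_eigenspace {f : End K V} {p : Submodule K V}
    (hp : ∀ x ∈ p, f x ∈ p) (hs : IsFinitelySemisimple (f.restrict hp)) (μ : K) :
    p ⊓ f.maxGenEigenspace μ ≤ f.eigenspace μ := by
  have h : Submodule.comap p.subtype (f.maxGenEigenspace μ) =
      Submodule.comap p.subtype (f.eigenspace μ) := by
    rw [← genEigenspace_restrict f p ⊤ μ hp, ← genEigenspace_restrict f p 1 μ hp]
    exact hs.genEigenspace_eq_eigenspace μ ENat.top_pos
  rintro x ⟨hxp, hx⟩
  exact h.le (show (⟨x, hxp⟩ : p) ∈ Submodule.comap p.subtype _ from hx)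

lemma isFinitelySemisimple_restrict_eigenspace_pow (f : End K V) {n : ℕ} (hn : (n : K) ≠ 0)
    {ν : K} (hν : ν ≠ 0) (hp : ∀ x ∈ (f ^ n).eigenspace ν, f x ∈ (f ^ n).eigenspace ν) :
    IsFinitelySemisimple (f.restrict hp) := by
  have hroot : aeval (f.restrict hp) (X ^ n - C ν) = 0 := by
    ext y
    have hy : (f ^ n) (y : V) = ν • (y : V) := mem_eigenspace_iff.mp y.2
    simp [pow_restrict n hp, LinearMap.restrict_apply, hy, Module.algebraMap_end_apply]
  exact (isSemisimple_of_squarefree_aeval_eq_zero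
    (separable_X_pow_sub_C ν hn hν).squarefree hroot).isFinitelySemisimple

variable [IsAlgClosed K] [FiniteDimensional K V]

lemma le_iSup_inf_maxGenEigenspace {f : End K V} {p : Submodule K V} (hp : ∀ x ∈ p, f x ∈ p) :
    p ≤ ⨆ μ, p ⊓ f.maxGenEigenspace μ := by
  rw [← Submodule.inf_iSup_genEigenspace hp, iSup_maxGenEigenspace_eq_top, inf_top_eq]

lemma genEigenspace_pow_le_iSup (f : End K V) {n : ℕ} {ν : K} {k : ℕ∞}
    (hk : ∀ μ, (f ^ n).genEigenspace ν k ⊓ f.maxGenEigenspace μ ≤ f.genEigenspace μ k) :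
    (f ^ n).genEigenspace ν k ≤ ⨆ (μ : K) (_ : μ ^ n = ν), f.genEigenspace μ k := by
  refine (le_iSup_inf_maxGenEigenspace fun x hx =>
    mapsTo_genEigenspace_of_comm ((Commute.refl f).pow_left n) ν k hx).trans
    (iSup_le fun μ => ?_)
  by_cases hμ : μ ^ n = ν
  · exact (hk μ).trans (le_iSup₂_of_le μ hμ le_rfl)
  · have hdisj : Disjoint ((f ^ n).genEigenspace ν k) (f.maxGenEigenspace μ) :=
      (disjoint_genEigenspace _ (Ne.symm hμ) k ⊤).mono_right
        (genEigenspace_le_genEigenspace_pow f μ ⊤ n)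
    rw [hdisj.eq_bot]
    exact bot_le

lemma iSup_genEigenspace_pow (f : End K V) (n : ℕ) (k : ℕ∞) (P : K → Prop)
    (hP : ∀ μ, P (μ ^ n) ↔ P μ)
    (hk : ∀ ν, P ν → ∀ μ, (f ^ n).genEigenspace ν k ⊓ f.maxGenEigenspace μ ≤
      f.genEigenspace μ k) :
    ⨆ (ν : K) (_ : P ν), (f ^ n).genEigenspace ν k = ⨆ (μ : K) (_ : P μ), f.genEigenspace μ k := by
  apply le_antisymm
  · refine iSup₂_le fun ν hν => (genEigenspace_pow_le_iSup f (hk ν hν)).trans ?_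
    exact iSup₂_le fun μ hμ => le_iSup₂_of_le μ ((hP μ).mp (hμ ▸ hν)) le_rfl
  · exact iSup₂_le fun μ hμ => (genEigenspace_le_genEigenspace_pow f μ k n).trans
      (le_iSup₂_of_le (μ ^ n) ((hP μ).mpr hμ) le_rfl)

lemma iSup_maxGenEigenspace_pow (f : End K V) (n : ℕ) (P : K → Prop)
    (hP : ∀ μ, P (μ ^ n) ↔ P μ) :
    ⨆ (ν : K) (_ : P ν), (f ^ n).maxGenEigenspace ν = ⨆ (μ : K) (_ : P μ), f.maxGenEigenspace μ :=
  iSup_genEigenspace_pow f n ⊤ P hP fun _ _ _ => inf_le_right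

lemma iSup_eigenspace_pow (f : End K V) {n : ℕ} (hn : (n : K) ≠ 0) (P : K → Prop)
    (hP : ∀ μ, P (μ ^ n) ↔ P μ) (hP₀ : ¬ P 0) :
    ⨆ (ν : K) (_ : P ν), (f ^ n).eigenspace ν = ⨆ (μ : K) (_ : P μ), f.eigenspace μ :=
  iSup_genEigenspace_pow f n 1 P hP fun ν hν =>
    have hp : ∀ x ∈ (f ^ n).eigenspace ν, f x ∈ (f ^ n).eigenspace ν := fun _ hx =>
      mapsTo_genEigenspace_of_comm ((Commute.refl f).pow_left n) ν 1 hx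
    inf_maxGenEigenspace_le_eigenspace hp
      (f.isFinitelySemisimple_restrict_eigenspace_pow hn (fun h => hP₀ (h ▸ hν)) hp)

end Field

end Module.End

theorem spec_and_periphProj_of_nth_root_general
    (d n : ℕ) (hn : 0 < n) (Φ Φn : Module.End ℂ (Mat d))
    (hroot : Φn ^ n = Φ) :
    spectrum ℂ Φ = (fun μ : ℂ => μ ^ n) '' spectrum ℂ Φn ∧
    (∀ Q : Module.End ℂ (Mat d), IsPeriphProj Φ Q ↔ IsPeriphProj Φn Q) ∧
    attrSubspace Φ = attrSubspace Φn := by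
  subst hroot
  have hnorm (μ : ℂ) : ‖μ ^ n‖ = 1 ↔ ‖μ‖ = 1 := by
    rw [norm_pow, pow_eq_one_iff_of_nonneg (norm_nonneg μ) hn.ne']
  have hattr : attrSubspace (Φn ^ n) = attrSubspace Φn :=
    Φn.iSup_eigenspace_pow (Nat.cast_ne_zero.mpr hn.ne') (‖·‖ = 1) hnorm (by simp)
  have hker := Φn.iSup_maxGenEigenspace_pow n (‖·‖ ≠ 1) fun μ => (hnorm μ).not
  refine ⟨spectrum.map_pow_of_pos Φn hn, fun Q => ?_, hattr⟩
  rw [IsPeriphProj, IsPeriphProj, hattr, hker]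

/-- If `Φ` and `Φₙ` are quantum channels with `Φ = Φₙⁿ` (`n ≥ 1`), then
`spec(Φ) = {μⁿ : μ ∈ spec(Φₙ)}`, the peripheral eigenprojections of `Φ` and `Φₙ`
coincide, and `Attr(Φ) = Attr(Φₙ)`. -/
theorem spec_and_periphProj_of_nth_root
    (d n : ℕ) (hn : 0 < n) (Φ Φn : Module.End ℂ (Mat d))
    (hCP : IsCompletelyPositive Φ) (hTP : IsTracePreserving Φ)
    (hCPn : IsCompletelyPositive Φn) (hTPn : IsTracePreserving Φn)
    (hroot : Φn ^ n = Φ) :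
    spectrum ℂ Φ = (fun μ : ℂ => μ ^ n) '' spectrum ℂ Φn ∧
    (∀ Q : Module.End ℂ (Mat d), IsPeriphProj Φ Q ↔ IsPeriphProj Φn Q) ∧
    attrSubspace Φ = attrSubspace Φn :=
  spec_and_periphProj_of_nth_root_general d n hn Φ Φn hroot
end

section
/- If Φ is an infinitely divisible quantum channel (for every n there is a channel Φₙ with Φₙⁿ = Φ), then its peripheral channel satisfies Φ_P = (Φ_{n,P})ⁿ for all n, where Φ_P = 𝒫_P ∘ Φ and Φ_{n,P} = 𝒫_{P,n} ∘ Φₙ. -/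
/-!
An eigenvector of `Φₙ` for a peripheral eigenvalue `μ` is an eigenvector of `Φ = Φₙⁿ` for the
peripheral eigenvalue `μⁿ`, and a generalized eigenvector of `Φₙ` for `|μ| ≠ 1` is one of `Φ`
for `|μⁿ| ≠ 1`. So the range and kernel of `𝒫_{P,n}` lie in those of `𝒫_P`, which forces the two
idempotents to be equal. As `𝒫_{P,n}` is a spectral projection of `Φₙ`, its range and kernel are
`Φₙ`-invariant, so it commutes with `Φₙ` and `(𝒫_{P,n} Φₙ)ⁿ = 𝒫_{P,n} Φₙⁿ = 𝒫_P Φ`.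
-/

open Matrix
open scoped ComplexOrder

namespace Module.End

variable {R M : Type*} [CommRing R] [AddCommGroup M] [Module R M]

lemma eigenspace_le_eigenspace_pow (f : End R M) (μ : R) (n : ℕ) :
    f.eigenspace μ ≤ (f ^ n).eigenspace (μ ^ n) := by
  intro x hx
  rw [mem_eigenspace_iff] at hx ⊢
  induction n with
  | zero => simp
  | succ n ih => rw [pow_succ, mul_apply, hx, map_smul, ih, smul_smul, pow_succ']

lemma maxGenEigenspace_le_maxGenEigenspace_pow (f : End R M) (μ : R) (n : ℕ) :
    f.maxGenEigenspace μ ≤ (f ^ n).maxGenEigenspace (μ ^ n) := by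
  intro x hx
  rw [mem_maxGenEigenspace] at hx ⊢
  obtain ⟨k, hk⟩ := hx
  set g : End R M := μ • 1
  have hfg : Commute f g := (Commute.one_right f).smul_right μ
  set s := ∑ i ∈ Finset.range n, f ^ i * g ^ (n - 1 - i)
  have hs : Commute s (f - g) := Commute.sum_left _ _ _ fun i _ =>
    (((Commute.refl f).sub_right hfg).pow_left i).mul_left
      ((hfg.symm.sub_right (Commute.refl g)).pow_left _)
  have hfactor : f ^ n - μ ^ n • 1 = s * (f - g) := by
    rw [hfg.geom_sum₂_mul, smul_pow, one_pow]
  exact ⟨k, by rw [hfactor, hs.mul_pow, mul_apply, hk, map_zero]⟩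

lemma iSup_mem_invtSubmodule {ι : Sort*} {f : End R M} {p : ι → Submodule R M}
    (hp : ∀ i, p i ∈ f.invtSubmodule) : ⨆ i, p i ∈ f.invtSubmodule := by
  rw [mem_invtSubmodule_iff_map_le, Submodule.map_iSup]
  exact iSup_mono fun i => (mem_invtSubmodule_iff_map_le f).mp (hp i)

end Module.End

open Module.End

noncomputable def nonperipheralSubspace {d : ℕ} (Φ : Module.End ℂ (Mat d)) :
    Submodule ℂ (Mat d) :=
  ⨆ (μ : ℂ) (_ : ‖μ‖ ≠ 1), maxGenEigenspace Φ μ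

lemma attrSubspace_le_attrSubspace_pow {d : ℕ} (Φ : Module.End ℂ (Mat d)) (n : ℕ) :
    attrSubspace Φ ≤ attrSubspace (Φ ^ n) :=
  iSup₂_le fun μ hμ => (eigenspace_le_eigenspace_pow Φ μ n).trans <|
    le_iSup₂_of_le (f := fun ν (_ : ‖ν‖ = 1) => eigenspace (Φ ^ n) ν) (μ ^ n)
      (by rw [norm_pow, hμ, one_pow]) le_rfl

lemma nonperipheralSubspace_le_nonperipheralSubspace_pow {d : ℕ} (Φ : Module.End ℂ (Mat d))
    {n : ℕ} (hn : n ≠ 0) :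
    nonperipheralSubspace Φ ≤ nonperipheralSubspace (Φ ^ n) :=
  iSup₂_le fun μ hμ => (maxGenEigenspace_le_maxGenEigenspace_pow Φ μ n).trans <|
    le_iSup₂_of_le (f := fun ν (_ : ‖ν‖ ≠ 1) => maxGenEigenspace (Φ ^ n) ν) (μ ^ n)
      (by rwa [norm_pow, Ne, pow_eq_one_iff_of_nonneg (norm_nonneg μ) hn]) le_rfl

namespace IsPeriphProj

variable {d : ℕ} {Φ Q : Module.End ℂ (Mat d)}

lemma isIdempotentElem (hQ : IsPeriphProj Φ Q) : IsIdempotentElem Q := hQ.1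

lemma range_eq (hQ : IsPeriphProj Φ Q) : LinearMap.range Q = attrSubspace Φ := hQ.2.1

lemma ker_eq (hQ : IsPeriphProj Φ Q) : LinearMap.ker Q = nonperipheralSubspace Φ := hQ.2.2

lemma commute (hQ : IsPeriphProj Φ Q) : Commute Q Φ := by
  refine (LinearMap.IsIdempotentElem.commute_iff hQ.isIdempotentElem).mpr ⟨?_, ?_⟩
  · rw [hQ.range_eq]
    exact iSup_mem_invtSubmodule fun μ => iSup_mem_invtSubmodule fun _ =>
      eigenspace_mem_invtSubmodule Φ μ
  · rw [hQ.ker_eq]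
    exact iSup_mem_invtSubmodule fun μ => iSup_mem_invtSubmodule fun _ =>
      genEigenspace_mem_invtSubmodule Φ μ ⊤

lemma eq_of_pow {P : Module.End ℂ (Mat d)} {n : ℕ} (hn : n ≠ 0) (hP : IsPeriphProj (Φ ^ n) P)
    (hQ : IsPeriphProj Φ Q) : P = Q := by
  have hrange : P * Q = Q :=
    (LinearMap.IsIdempotentElem.comp_eq_right_iff hP.isIdempotentElem Q).mpr <| by
      rw [hP.range_eq, hQ.range_eq]; exact attrSubspace_le_attrSubspace_pow Φ n
  have hker : P * Q = P :=
    (LinearMap.IsIdempotentElem.comp_eq_left_iff hQ.isIdempotentElem P).mpr <| by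
      rw [hP.ker_eq, hQ.ker_eq]; exact nonperipheralSubspace_le_nonperipheralSubspace_pow Φ hn
  exact hker.symm.trans hrange

end IsPeriphProj

theorem peripheral_channel_of_infinitely_divisible_general
    (d : ℕ) (Φ : Module.End ℂ (Mat d)) :
    ∀ n : ℕ, 0 < n → ∀ Φn : Module.End ℂ (Mat d),
      IsCompletelyPositive Φn → IsTracePreserving Φn → Φn ^ n = Φ →
      ∀ Pp Ppn : Module.End ℂ (Mat d),
        IsPeriphProj Φ Pp → IsPeriphProj Φn Ppn →
        Pp * Φ = (Ppn * Φn) ^ n := by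
  intro n hn Φn _ _ hpow Pp Ppn hPp hPpn
  subst hpow
  rw [hPpn.commute.mul_pow, hPpn.isIdempotentElem.pow_eq hn.ne', hPp.eq_of_pow hn.ne' hPpn]

/-- If `Φ` is an infinitely divisible quantum channel, then its
peripheral channel `Φ_P = P_P ∘ Φ` satisfies `Φ_P = (Φ_{n,P})ⁿ` for every `n ≥ 1` and
every `n`-th root channel `Φₙ` of `Φ`, where `Φ_{n,P} = P_{P,n} ∘ Φₙ`. -/
theorem peripheral_channel_of_infinitely_divisible
    (d : ℕ) (Φ : Module.End ℂ (Mat d))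
    (hCP : IsCompletelyPositive Φ) (hTP : IsTracePreserving Φ)
    (hdiv : ∀ n : ℕ, 0 < n → ∃ Φn : Module.End ℂ (Mat d),
      IsCompletelyPositive Φn ∧ IsTracePreserving Φn ∧ Φn ^ n = Φ) :
    ∀ n : ℕ, 0 < n → ∀ Φn : Module.End ℂ (Mat d),
      IsCompletelyPositive Φn → IsTracePreserving Φn → Φn ^ n = Φ →
      ∀ Pp Ppn : Module.End ℂ (Mat d),
        IsPeriphProj Φ Pp → IsPeriphProj Φn Ppn →
        Pp * Φ = (Ppn * Φn) ^ n :=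
  peripheral_channel_of_infinitely_divisible_general d Φ
end

section
/- A quantum channel Φ on d×d matrices satisfies Φ† = Φ⁻¹ (adjoint with respect to the Hilbert–Schmidt inner product) if and only if there exists a unitary U with Φ(X) = U X U† for all X. -/
open Matrix
open scoped ComplexOrder

/-! If `Φ† = Φ⁻¹`, then `Φ†(1) = 1` by trace preservation, so `Φ` is unital, and `Φ` is an
isometry for the Hilbert–Schmidt norm. For a unital completely positive map the Kadison–Schwarz gap
`Φ(X†X) - Φ(X)†Φ(X)` is positive semidefinite; here it is also traceless, hence zero, and
polarization makes `Φ` multiplicative. Thus `Φ` is a `*`-automorphism of `M_d`, and these are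
all implemented by unitaries. Conversely, the adjoint of `X ↦ UXU†` is `X ↦ U†XU`, its inverse. -/

lemma Matrix.eq_of_forall_trace_conjTranspose_mul_eq {m n 𝕜 : Type*} [Fintype m] [Fintype n]
    [RCLike 𝕜] {X Y : Matrix m n 𝕜} (h : ∀ B : Matrix m n 𝕜, (Xᴴ * B).trace = (Yᴴ * B).trace) :
    X = Y := by
  have := sub_eq_zero.mpr (h (X - Y))
  rwa [← trace_sub, ← Matrix.sub_mul, ← conjTranspose_sub,
    trace_conjTranspose_mul_self_eq_zero_iff, sub_eq_zero] at this

lemma Matrix.trace_conjTranspose_mul_conj {n 𝕜 : Type*} [Fintype n] [RCLike 𝕜]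
    (A B U : Matrix n n 𝕜) : (Aᴴ * (U * B * Uᴴ)).trace = ((Uᴴ * A * U)ᴴ * B).trace := by
  simp only [conjTranspose_mul, conjTranspose_conjTranspose, Matrix.mul_assoc]
  rw [trace_mul_comm Uᴴ]
  simp only [Matrix.mul_assoc]

lemma Matrix.posSemidef_fromBlocks_conjTranspose_mul_self {m n 𝕜 : Type*} [Fintype m]
    [DecidableEq m] [Fintype n] [RCLike 𝕜] (X : Matrix m n 𝕜) :
    (fromBlocks (Xᴴ * X) Xᴴ X 1).PosSemidef := by
  have := posSemidef_conjTranspose_mul_self (fromCols X (1 : Matrix m m 𝕜))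
  rwa [conjTranspose_fromCols_eq_fromRows_conjTranspose, fromRows_mul_fromCols,
    conjTranspose_one, Matrix.mul_one, Matrix.one_mul, Matrix.one_mul] at this

theorem Matrix.exists_mem_unitary_conj_of_starAlgEquiv {𝕜 n : Type*} [RCLike 𝕜] [Fintype n]
    [DecidableEq n] (f : Matrix n n 𝕜 ≃⋆ₐ[𝕜] Matrix n n 𝕜) :
    ∃ U ∈ unitary (Matrix n n 𝕜), ∀ X, f X = U * X * star U := by
  let E := toEuclideanCLM (n := n) (𝕜 := 𝕜)
  let g := (E.symm.trans f).trans E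
  obtain ⟨e, he⟩ := g.eq_linearIsometryEquivConjStarAlgEquiv
    (LinearMap.continuous_of_finiteDimensional g.toAlgEquiv.toLinearMap)
  let u := Unitary.linearIsometryEquiv.symm e
  refine ⟨E.symm u, Unitary.map_mem E.symm u.2, fun X => E.injective ?_⟩
  have hX : g (E X) = u * E X * star u := by
    rw [he, ← Unitary.conjStarAlgAut_symm_unitaryLinearIsometryEquiv]; rfl
  change E (f X) = E (E.symm u * X * star (E.symm u))
  rw [map_mul, map_mul, map_star, E.apply_symm_apply]
  simpa [g] using hX

theorem LinearMap.map_star_mul_of_map_star_mul_self {A B : Type*} [Ring A] [StarRing A]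
    [Algebra ℂ A] [StarModule ℂ A] [Ring B] [StarRing B] [Algebra ℂ B] [StarModule ℂ B]
    (Φ : A →ₗ[ℂ] B) (h : ∀ x, Φ (star x * x) = star (Φ x) * Φ x) (x y : A) :
    Φ (star x * y) = star (Φ x) * Φ y := by
  have hsymm : ∀ a b : A, Φ (star a * b) - star (Φ a) * Φ b
      = -(Φ (star b * a) - star (Φ b) * Φ a) := fun a b => by
    have := h (a + b)
    simp only [star_add, add_mul, mul_add, map_add] at this
    linear_combination (norm := module) this - h a - h b
  have hI := hsymm x (Complex.I • y)
  simp only [map_smul, star_smul, smul_mul_assoc, mul_smul_comm, Complex.star_def,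
    Complex.conj_I] at hI
  have hcomm : Φ (star x * y) - star (Φ x) * Φ y = Φ (star y * x) - star (Φ y) * Φ x := by
    have : Complex.I • ((Φ (star x * y) - star (Φ x) * Φ y)
        - (Φ (star y * x) - star (Φ y) * Φ x)) = 0 := by
      linear_combination (norm := module) hI
    simpa [sub_eq_zero] using this
  rw [← sub_eq_zero]
  linear_combination (norm := module) (1 / 2 : ℂ) • (hsymm x y + hcomm)

-- Identifies the index set of `Mat d ⊗ Mat 2` used by `blockApply` with that of `2 × 2` blocks.
def finProdFinTwoEquivSum (d : ℕ) : Fin d × Fin 2 ≃ Fin d ⊕ Fin d :=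
  (Equiv.prodComm _ _).trans ((finTwoEquiv.prodCongr (.refl _)).trans (Equiv.boolProdEquivSum _))

lemma blockApply_two_fromBlocks {d : ℕ} (Φ : Module.End ℂ (Mat d)) (A B C D : Mat d) :
    blockApply Φ 2 ((fromBlocks A B C D).submatrix (finProdFinTwoEquivSum d)
        (finProdFinTwoEquivSum d)) =
      (fromBlocks (Φ A) (Φ B) (Φ C) (Φ D)).submatrix (finProdFinTwoEquivSum d)
        (finProdFinTwoEquivSum d) := by
  ext ⟨i, a⟩ ⟨j, b⟩
  fin_cases a <;> fin_cases b <;> rfl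

namespace IsCompletelyPositive

variable {d : ℕ} {Φ : Module.End ℂ (Mat d)}

lemma posSemidef_fromBlocks (hΦ : IsCompletelyPositive Φ) {A B C D : Mat d}
    (h : (fromBlocks A B C D).PosSemidef) : (fromBlocks (Φ A) (Φ B) (Φ C) (Φ D)).PosSemidef := by
  have := hΦ 2 _ (h.submatrix (finProdFinTwoEquivSum d))
  rwa [blockApply_two_fromBlocks, posSemidef_submatrix_equiv] at this

lemma map_conjTranspose (hΦ : IsCompletelyPositive Φ) (X : Mat d) : Φ Xᴴ = (Φ X)ᴴ := by
  have h := hΦ.posSemidef_fromBlocks (posSemidef_fromBlocks_conjTranspose_mul_self X)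
  exact (isHermitian_fromBlocks_iff.mp h.isHermitian).2.2.1.symm

lemma posSemidef_map_conjTranspose_mul_self_sub (hΦ : IsCompletelyPositive Φ) (hΦ1 : Φ 1 = 1)
    (X : Mat d) : (Φ (Xᴴ * X) - (Φ X)ᴴ * Φ X).PosSemidef := by
  have h := hΦ.posSemidef_fromBlocks (posSemidef_fromBlocks_conjTranspose_mul_self X)
  rw [hΦ1, hΦ.map_conjTranspose] at h
  let : Invertible (1 : Mat d) := invertibleOne
  have := (PosDef.fromBlocks₂₂ (Φ (Xᴴ * X)) (Φ X)ᴴ PosDef.one).mp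
    (by rwa [conjTranspose_conjTranspose])
  simpa only [inv_one, Matrix.mul_one, conjTranspose_conjTranspose] using this

-- The Kadison–Schwarz gap is positive semidefinite and traceless.
lemma map_conjTranspose_mul_self (hΦ : IsCompletelyPositive Φ) (hΦ1 : Φ 1 = 1)
    (hTP : IsTracePreserving Φ) (hiso : ∀ X, ((Φ X)ᴴ * Φ X).trace = (Xᴴ * X).trace) (X : Mat d) :
    Φ (Xᴴ * X) = (Φ X)ᴴ * Φ X := by
  have htr : (Φ (Xᴴ * X) - (Φ X)ᴴ * Φ X).trace = 0 := by rw [trace_sub, hTP, hiso, sub_self]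
  exact sub_eq_zero.mp
    ((hΦ.posSemidef_map_conjTranspose_mul_self_sub hΦ1 X).trace_eq_zero_iff.mp htr)

lemma map_mul (hΦ : IsCompletelyPositive Φ) (hΦ1 : Φ 1 = 1)
    (hTP : IsTracePreserving Φ) (hiso : ∀ X, ((Φ X)ᴴ * Φ X).trace = (Xᴴ * X).trace) (A B : Mat d) :
    Φ (A * B) = Φ A * Φ B := by
  have := Φ.map_star_mul_of_map_star_mul_self (hΦ.map_conjTranspose_mul_self hΦ1 hTP hiso) Aᴴ B
  rwa [star_eq_conjTranspose, star_eq_conjTranspose, conjTranspose_conjTranspose,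
    hΦ.map_conjTranspose, conjTranspose_conjTranspose] at this

end IsCompletelyPositive

/-- A quantum channel `Φ` satisfies `Φ† = Φ⁻¹` (adjoint with respect to
the Hilbert–Schmidt inner product) if and only if it is a unitary channel
`Φ(X) = U X U†`. -/
theorem adjoint_eq_inverse_iff_unitary
    (d : ℕ) (Φ Ψ : Module.End ℂ (Mat d))
    (hCP : IsCompletelyPositive Φ) (hTP : IsTracePreserving Φ)
    (hadj : ∀ A B : Mat d, (Aᴴ * Φ B).trace = ((Ψ A)ᴴ * B).trace) :
    (Ψ ∘ₗ Φ = LinearMap.id ∧ Φ ∘ₗ Ψ = LinearMap.id) ↔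
      ∃ U : Mat d, U * Uᴴ = 1 ∧ Uᴴ * U = 1 ∧ ∀ X : Mat d, Φ X = U * X * Uᴴ := by
  constructor
  · rintro ⟨hΨΦ, hΦΨ⟩
    have hΨ1 : Ψ 1 = 1 :=
      eq_of_forall_trace_conjTranspose_mul_eq fun B => by simpa [hTP B] using (hadj 1 B).symm
    have hΦ1 : Φ 1 = 1 := by simpa [hΨ1] using LinearMap.congr_fun hΦΨ 1
    have hiso (X : Mat d) : ((Φ X)ᴴ * Φ X).trace = (Xᴴ * X).trace := by
      rw [hadj, ← LinearMap.comp_apply, hΨΦ, LinearMap.id_apply]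
    let f : Mat d ≃⋆ₐ[ℂ] Mat d := .ofAlgEquiv
      (.ofLinearEquiv (.ofLinearMap Φ Ψ hΦΨ hΨΦ) hΦ1 (hCP.map_mul hΦ1 hTP hiso))
      hCP.map_conjTranspose
    obtain ⟨U, hU, hfU⟩ := exists_mem_unitary_conj_of_starAlgEquiv f
    exact ⟨U, Unitary.mul_star_self_of_mem hU, Unitary.star_mul_self_of_mem hU, hfU⟩
  · rintro ⟨U, hUU', hU'U, hΦU⟩
    have hΨU (A : Mat d) : Ψ A = Uᴴ * A * U :=
      eq_of_forall_trace_conjTranspose_mul_eq fun B => by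
        rw [← hadj, hΦU, trace_conjTranspose_mul_conj]
    refine ⟨LinearMap.ext fun X => ?_, LinearMap.ext fun X => ?_⟩ <;>
      simp only [LinearMap.comp_apply, LinearMap.id_apply, hΦU, hΨU, ← Matrix.mul_assoc, hUU',
        hU'U, Matrix.one_mul] <;> simp only [Matrix.mul_assoc, hUU', hU'U, Matrix.mul_one]
end

section
/- Let Φ be a faithful quantum channel with full-rank fixed state σ and Petz recovery map Φ‡(X) = ∑_k σ^{1/2} A_k† σ^{-1/2} X σ^{-1/2} A_k σ^{1/2}. Then for every peripheral eigenvector X (Φ X = λ X, |λ| = 1) one has Φ‡(X) = λ̄ X; consequently Φ‡ Φ (X) = X = Φ Φ‡(X) for all X in Attr(Φ). -/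
open Matrix
open scoped ComplexOrder

/-!
If `Φ X = μ X` with `|μ| = 1`, put `Y = X σ⁻¹`. The Kadison–Schwarz defect
`∑ₖ (Aₖ Y - μ Y Aₖ) σ (Aₖ Y - μ Y Aₖ)ᴴ` equals `Φ (X Yᴴ) - X Yᴴ`, which is traceless because `Φ`
preserves the trace; being positive semidefinite it vanishes, so `Y` intertwines every Kraus
operator, and this makes `σ^{1/2} X σ^{-1/2}` an eigenvector of the Petz map `Ψ` for `conj μ`.
Since `Ψ` is again a channel fixing `σ` whose Petz map is `Φ`, applying this twice shows that the
eigenspace of `Ψ` for `conj μ` is invariant under `Z ↦ σ Z σ⁻¹`. That map is diagonalizable with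
positive eigenvalues, so `Z ↦ σ^{-1/2} Z σ^{1/2}` is a polynomial in it and preserves the eigenspace
as well; it maps `σ^{1/2} X σ^{-1/2}` back to `X`.
-/

open Polynomial

theorem mul_mul_eq_of_mul_eq_one {M : Type*} [Monoid M] {a b : M} (h : a * b = 1) (c : M) :
    a * (b * c) = c := by
  rw [← mul_assoc, h, one_mul]

namespace Matrix

theorem map_eval_hadamard_mem {m n 𝕜 : Type*} [Field 𝕜] {W : Submodule 𝕜 (Matrix m n 𝕜)}
    {r : Matrix m n 𝕜} (hW : ∀ Z ∈ W, r ⊙ Z ∈ W) (p : 𝕜[X]) {Z : Matrix m n 𝕜} (hZ : Z ∈ W) :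
    r.map p.eval ⊙ Z ∈ W := by
  induction p using Polynomial.induction_on generalizing Z with
  | C a =>
    convert W.smul_mem a hZ using 1
    ext i j
    simp only [eval_C, hadamard_apply, map_apply, smul_apply, smul_eq_mul]
  | add p q hp hq =>
    convert W.add_mem (hp hZ) (hq hZ) using 1
    ext i j
    simp only [eval_add, hadamard_apply, map_apply, add_mul, add_apply]
  | monomial k a h =>
    convert hW _ (h hZ) using 1
    ext i j
    simp only [eval_mul, eval_C, eval_pow, eval_X, hadamard_apply, map_apply]
    ring

/-- Only the finitely many entries of `r` matter, and `f` agrees with a polynomial on them. -/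
theorem map_hadamard_mem {m n 𝕜 : Type*} [Fintype m] [Fintype n] [Field 𝕜] [DecidableEq 𝕜]
    {W : Submodule 𝕜 (Matrix m n 𝕜)} {r : Matrix m n 𝕜} (hW : ∀ Z ∈ W, r ⊙ Z ∈ W) (f : 𝕜 → 𝕜)
    {Z : Matrix m n 𝕜} (hZ : Z ∈ W) : r.map f ⊙ Z ∈ W := by
  let entries := Finset.univ.image fun ij : m × n => r ij.1 ij.2
  have hf : r.map f = r.map (Lagrange.interpolate entries id f).eval := by
    ext i j
    exact (Lagrange.eval_interpolate_at_node f (Set.injOn_id _)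
      (Finset.mem_image_of_mem (fun ij : m × n => r ij.1 ij.2) (Finset.mem_univ (i, j)))).symm
  exact hf ▸ map_eval_hadamard_mem hW _ hZ

theorem diagonal_mul_mul_diagonal {n α : Type*} [Fintype n] [DecidableEq n] [CommSemiring α]
    (a b : n → α) (Y : Matrix n n α) :
    diagonal a * Y * diagonal b = of (fun i j => a i * b j) ⊙ Y := by
  ext i j
  simp only [mul_diagonal, diagonal_mul, hadamard_apply, of_apply]
  ring

theorem PosDef.exists_starAlgEquiv_diagonal {n : Type*} [Fintype n] [DecidableEq n]
    {s t : Matrix n n ℂ} (hs : s.PosDef) (hts : t * s = 1) :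
    ∃ (c : Matrix n n ℂ ≃⋆ₐ[ℂ] Matrix n n ℂ) (e : n → ℝ), (∀ i, 0 < e i) ∧
      s = c (diagonal fun i => (e i : ℂ)) ∧ t = c (diagonal fun i => (e i : ℂ)⁻¹) := by
  refine ⟨Unitary.conjStarAlgAut ℂ _ hs.1.eigenvectorUnitary, hs.1.eigenvalues,
    hs.eigenvalues_pos, hs.1.spectral_theorem, ?_⟩
  set c := Unitary.conjStarAlgAut ℂ (Matrix n n ℂ) hs.1.eigenvectorUnitary
  set e := hs.1.eigenvalues
  have hs_eq : s = c (diagonal fun i => (e i : ℂ)) := hs.1.spectral_theorem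
  have h : s * c (diagonal fun i => (e i : ℂ)⁻¹) = 1 := by
    rw [hs_eq, ← map_mul, diagonal_mul_diagonal]
    have he : ∀ i, (e i : ℂ) ≠ 0 := fun i => Complex.ofReal_ne_zero.mpr (hs.eigenvalues_pos i).ne'
    simp [he]
  rw [← mul_one t, ← h, ← mul_assoc, hts, one_mul]

/-- In an eigenbasis `e` of `s`, `Z ↦ s Z s⁻¹` and `Z ↦ s⁻¹ Z s` are the Schur multipliers by
`eᵢ / eⱼ` and `eⱼ / eᵢ`, and `eⱼ / eᵢ` is a function of `(eᵢ / eⱼ) ^ 2` because `e > 0`. -/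
theorem PosDef.conj_mem_of_conj_sq_mem {n : Type*} [Fintype n] [DecidableEq n]
    {s t : Matrix n n ℂ} (hs : s.PosDef) (hts : t * s = 1)
    {W : Submodule ℂ (Matrix n n ℂ)} (hW : ∀ Z ∈ W, s * (s * Z * t) * t ∈ W)
    {Z : Matrix n n ℂ} (hZ : Z ∈ W) : t * Z * s ∈ W := by
  obtain ⟨c, e, he, rfl, rfl⟩ := hs.exists_starAlgEquiv_diagonal hts
  have hconj : ∀ a b Y, c (diagonal a) * c Y * c (diagonal b) =
      c (of (fun i j => a i * b j) ⊙ Y) := by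
    intro a b Y
    rw [← map_mul, ← map_mul, diagonal_mul_mul_diagonal]
  let W' := W.comap c.toAlgEquiv.toLinearMap
  have hW' : ∀ Y ∈ W', of (fun i j => (((e i / e j) ^ 2 : ℝ) : ℂ)) ⊙ Y ∈ W' := by
    intro Y hY
    change c _ ∈ W
    convert hW (c Y) hY using 1
    rw [hconj, hconj, ← hadamard_assoc]
    congr 2
    ext i j
    simp only [of_apply, hadamard_apply]
    push_cast
    ring
  have hsqrt : (of fun i j => (((e i / e j) ^ 2 : ℝ) : ℂ)).map (fun z => ((Real.sqrt z.re)⁻¹ : ℂ))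
      = of fun i j => (e i : ℂ)⁻¹ * e j := by
    ext i j
    rw [map_apply, of_apply, of_apply, Complex.ofReal_re,
      Real.sqrt_sq (div_pos (he i) (he j)).le, Complex.ofReal_div, inv_div, div_eq_inv_mul]
  have key : c (of (fun i j => (e i : ℂ)⁻¹ * e j) ⊙ c.symm Z) ∈ W := hsqrt ▸
    map_hadamard_mem hW' (fun z => ((Real.sqrt z.re)⁻¹ : ℂ)) (Z := c.symm Z)
      (by simpa [W'] using hZ)
  rwa [← hconj, c.apply_symm_apply] at key

theorem trace_sum_mul_conjTranspose_self_eq_zero_iff {ι m n R : Type*} [Fintype ι] [Fintype m]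
    [Fintype n] [Ring R] [PartialOrder R] [StarRing R] [StarOrderedRing R] [NoZeroDivisors R]
    (N : ι → Matrix m n R) :
    (∑ k, N k * (N k)ᴴ).trace = 0 ↔ ∀ k, N k = 0 := by
  rw [trace_sum, Finset.sum_eq_zero_iff_of_nonneg fun k _ =>
    (posSemidef_self_mul_conjTranspose (N k)).trace_nonneg]
  simp only [Finset.mem_univ, true_implies, trace_mul_conjTranspose_self_eq_zero_iff]

end Matrix

variable {n ι : Type*} [Fintype n]

/-- With `s = σ^{1/2}` and `t = σ^{-1/2}`, the Kraus operators of the Petz recovery map of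
`krausMap A` with respect to `σ`. -/
def petzKraus (s t : Matrix n n ℂ) (A : ι → Matrix n n ℂ) (k : ι) : Matrix n n ℂ :=
  s * (A k)ᴴ * t

theorem petzKraus_conjTranspose {s t : Matrix n n ℂ} (hs : s.IsHermitian) (ht : t.IsHermitian)
    (A : ι → Matrix n n ℂ) (k : ι) : (petzKraus s t A k)ᴴ = t * A k * s := by
  simp [petzKraus, hs.eq, ht.eq, mul_assoc]

theorem petzKraus_petzKraus [DecidableEq n] {s t : Matrix n n ℂ} (hs : s.IsHermitian)
    (ht : t.IsHermitian) (hst : s * t = 1) (A : ι → Matrix n n ℂ) :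
    petzKraus s t (petzKraus s t A) = A := by
  ext1 k
  rw [petzKraus, petzKraus_conjTranspose hs ht]
  simp only [mul_assoc, hst, mul_one, mul_mul_eq_of_mul_eq_one hst]

variable [Fintype ι]

def krausMap (A : ι → Matrix n n ℂ) : Module.End ℂ (Matrix n n ℂ) where
  toFun X := ∑ k, A k * X * (A k)ᴴ
  map_add' X Y := by simp only [mul_add, add_mul, Finset.sum_add_distrib]
  map_smul' c X := by simp only [mul_smul_comm, smul_mul_assoc, Finset.smul_sum, RingHom.id_apply]

@[simp]
theorem krausMap_apply (A : ι → Matrix n n ℂ) (X : Matrix n n ℂ) :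
    krausMap A X = ∑ k, A k * X * (A k)ᴴ := rfl

theorem krausMap_conjTranspose (A : ι → Matrix n n ℂ) (X : Matrix n n ℂ) :
    krausMap A Xᴴ = (krausMap A X)ᴴ := by
  simp [conjTranspose_sum, mul_assoc]

variable [DecidableEq n] {A : ι → Matrix n n ℂ}

theorem trace_krausMap (hTP : ∑ k, (A k)ᴴ * A k = 1) (X : Matrix n n ℂ) :
    (krausMap A X).trace = X.trace := by
  simp only [krausMap_apply, trace_sum, fun k => trace_mul_cycle (A k) X (A k)ᴴ]
  rw [← trace_sum, ← Finset.sum_mul, hTP, one_mul]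

theorem kraus_mul_eq_smul_mul_of_eigen (hTP : ∑ k, (A k)ᴴ * A k = 1) {s : Matrix n n ℂ}
    (hs : IsUnit s) (hfix : krausMap A (s * sᴴ) = s * sᴴ) {μ : ℂ} (hμ : ‖μ‖ = 1)
    {Y : Matrix n n ℂ} (hY : krausMap A (Y * (s * sᴴ)) = μ • (Y * (s * sᴴ))) (k : ι) :
    A k * Y = μ • (Y * A k) := by
  set σ := s * sᴴ
  have hσ : σᴴ = σ := by simp [σ]
  have hμμ : μ * starRingEnd ℂ μ = 1 := by
    rw [Complex.mul_conj, Complex.normSq_eq_norm_sq, hμ]; norm_num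
  have hY' : krausMap A (σ * Yᴴ) = starRingEnd ℂ μ • (σ * Yᴴ) := by
    rw [← hσ, ← conjTranspose_mul, krausMap_conjTranspose, hY, conjTranspose_smul]; rfl
  set N : ι → Matrix n n ℂ := fun k => (A k * Y - μ • (Y * A k)) * s
  have hexpand : ∀ k, N k * (N k)ᴴ = A k * (Y * σ * Yᴴ) * (A k)ᴴ
      - starRingEnd ℂ μ • (A k * (Y * σ) * (A k)ᴴ * Yᴴ) - μ • (Y * (A k * (σ * Yᴴ) * (A k)ᴴ))
      + (μ * starRingEnd ℂ μ) • (Y * (A k * σ * (A k)ᴴ) * Yᴴ) := by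
    intro k
    simp only [N, σ, conjTranspose_mul, conjTranspose_sub, conjTranspose_smul, sub_mul, mul_sub,
      smul_mul_assoc, mul_smul_comm, mul_assoc, starRingEnd_apply]
    module
  have hsum : ∑ k, N k * (N k)ᴴ = krausMap A (Y * σ * Yᴴ) - Y * σ * Yᴴ := by
    simp only [hexpand, Finset.sum_add_distrib, Finset.sum_sub_distrib, ← Finset.smul_sum,
      ← Finset.sum_mul, ← Finset.mul_sum, ← krausMap_apply, hY, hY', hfix]
    simp only [smul_mul_assoc, mul_smul_comm, mul_assoc]
    linear_combination (norm := module) -hμμ • (Y * (σ * Yᴴ))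
  have hN := (trace_sum_mul_conjTranspose_self_eq_zero_iff N).1
    (by rw [hsum, trace_sub, trace_krausMap hTP, sub_self]) k
  rwa [hs.mul_left_eq_zero, sub_eq_zero] at hN

section petz

variable {s t : Matrix n n ℂ}

theorem sum_petzKraus_conjTranspose_mul (hs : s.IsHermitian) (ht : t.IsHermitian)
    (hts : t * s = 1) (hfix : krausMap A (s * s) = s * s) :
    ∑ k, (petzKraus s t A k)ᴴ * petzKraus s t A k = 1 := by
  have h : ∀ k, (petzKraus s t A k)ᴴ * petzKraus s t A k = t * (A k * (s * s) * (A k)ᴴ) * t := by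
    intro k
    rw [petzKraus_conjTranspose hs ht, petzKraus]
    simp only [mul_assoc]
  rw [Finset.sum_congr rfl fun k _ => h k, ← Finset.sum_mul, ← Finset.mul_sum, ← krausMap_apply,
    hfix, ← mul_assoc, hts, one_mul, mul_eq_one_comm.1 hts]

theorem krausMap_petzKraus_mul_self (hTP : ∑ k, (A k)ᴴ * A k = 1) (hs : s.IsHermitian)
    (ht : t.IsHermitian) (hts : t * s = 1) :
    krausMap (petzKraus s t A) (s * s) = s * s := by
  have h : ∀ k, petzKraus s t A k * (s * s) * (petzKraus s t A k)ᴴ = s * ((A k)ᴴ * A k) * s := by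
    intro k
    rw [petzKraus_conjTranspose hs ht, petzKraus]
    simp only [mul_assoc, mul_mul_eq_of_mul_eq_one hts,
      mul_mul_eq_of_mul_eq_one (mul_eq_one_comm.1 hts)]
  rw [krausMap_apply, Finset.sum_congr rfl fun k _ => h k, ← Finset.sum_mul, ← Finset.mul_sum, hTP,
    mul_one]

theorem krausMap_petzKraus_of_intertwines (hTP : ∑ k, (A k)ᴴ * A k = 1) (hs : s.IsHermitian)
    (ht : t.IsHermitian) (hts : t * s = 1) {ν : ℂ} {Y : Matrix n n ℂ}
    (hY : ∀ k, Y * A k = ν • (A k * Y)) :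
    krausMap (petzKraus s t A) (s * Y * s) = ν • (s * Y * s) := by
  have h : ∀ k, petzKraus s t A k * (s * Y * s) * (petzKraus s t A k)ᴴ =
      ν • (s * ((A k)ᴴ * A k) * Y * s) := by
    intro k
    rw [petzKraus_conjTranspose hs ht, petzKraus]
    simp only [mul_assoc, mul_mul_eq_of_mul_eq_one hts,
      mul_mul_eq_of_mul_eq_one (mul_eq_one_comm.1 hts)]
    rw [← mul_assoc Y, hY, smul_mul_assoc, mul_smul_comm, mul_smul_comm]
    simp only [mul_assoc]
  rw [krausMap_apply, Finset.sum_congr rfl fun k _ => h k, ← Finset.smul_sum, ← Finset.sum_mul,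
    ← Finset.sum_mul, ← Finset.mul_sum, hTP, mul_one]

theorem krausMap_petzKraus_mul_mul_of_eigen (hTP : ∑ k, (A k)ᴴ * A k = 1)
    (hfix : krausMap A (s * s) = s * s) (hs : s.IsHermitian) (ht : t.IsHermitian)
    (hts : t * s = 1) {μ : ℂ} (hμ : ‖μ‖ = 1) {X : Matrix n n ℂ} (hX : krausMap A X = μ • X) :
    krausMap (petzKraus s t A) (s * X * t) = starRingEnd ℂ μ • (s * X * t) := by
  have hXY : X * (t * t) * (s * sᴴ) = X := by
    simp only [hs.eq, mul_assoc, mul_mul_eq_of_mul_eq_one hts, hts, mul_one]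
  have hint := kraus_mul_eq_smul_mul_of_eigen hTP ⟨⟨s, t, mul_eq_one_comm.1 hts, hts⟩, rfl⟩
    (by rwa [hs.eq]) hμ (hXY.symm ▸ hX)
  have hμμ : starRingEnd ℂ μ * μ = 1 := by
    rw [Complex.conj_mul', hμ]; norm_num
  have hY : ∀ k, X * (t * t) * A k = starRingEnd ℂ μ • (A k * (X * (t * t))) := fun k => by
    rw [hint k, smul_smul, hμμ, one_smul]
  have h := krausMap_petzKraus_of_intertwines hTP hs ht hts hY
  rwa [show s * (X * (t * t)) * s = s * X * t by simp only [mul_assoc, hts, mul_one]] at h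

theorem krausMap_petzKraus_apply_of_eigen (hTP : ∑ k, (A k)ᴴ * A k = 1)
    (hfix : krausMap A (s * s) = s * s) (hs : s.PosDef) (ht : t.IsHermitian) (hts : t * s = 1)
    {μ : ℂ} (hμ : ‖μ‖ = 1) {X : Matrix n n ℂ} (hX : krausMap A X = μ • X) :
    krausMap (petzKraus s t A) X = starRingEnd ℂ μ • X := by
  set G := Module.End.eigenspace (krausMap (petzKraus s t A)) (starRingEnd ℂ μ)
  have hG : ∀ Z ∈ G, s * (s * Z * t) * t ∈ G := by
    intro Z hZ
    have hΦ := krausMap_petzKraus_mul_mul_of_eigen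
      (sum_petzKraus_conjTranspose_mul hs.1 ht hts hfix)
      (krausMap_petzKraus_mul_self hTP hs.1 ht hts) hs.1 ht hts (by simpa using hμ)
      (Module.End.mem_eigenspace_iff.1 hZ)
    rw [petzKraus_petzKraus hs.1 ht (mul_eq_one_comm.1 hts), Complex.conj_conj] at hΦ
    exact Module.End.mem_eigenspace_iff.2
      (krausMap_petzKraus_mul_mul_of_eigen hTP hfix hs.1 ht hts hμ hΦ)
  have h := hs.conj_mem_of_conj_sq_mem hts hG (Module.End.mem_eigenspace_iff.2
    (krausMap_petzKraus_mul_mul_of_eigen hTP hfix hs.1 ht hts hμ hX))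
  rw [show t * (s * X * t) * s = X by
    simp only [mul_assoc, hts, mul_one, mul_mul_eq_of_mul_eq_one hts]] at h
  exact Module.End.mem_eigenspace_iff.1 h

end petz

theorem attrSubspace_le_eqLocus {d : ℕ} {Φ Ψ : Module.End ℂ (Mat d)}
    (h : ∀ (μ : ℂ) (X : Mat d), ‖μ‖ = 1 → Φ X = μ • X → Ψ X = starRingEnd ℂ μ • X) :
    attrSubspace Φ ≤ LinearMap.eqLocus (Ψ * Φ) 1 ⊓ LinearMap.eqLocus (Φ * Ψ) 1 := by
  refine iSup₂_le fun μ hμ X hX => ?_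
  have hΦX := Module.End.mem_eigenspace_iff.1 hX
  have hΨX := h μ X hμ hΦX
  have hμμ : starRingEnd ℂ μ * μ = 1 := by
    rw [Complex.conj_mul', hμ]; norm_num
  constructor
  · simp [hΦX, hΨX, smul_smul, hμμ, mul_comm μ]
  · simp [hΦX, hΨX, smul_smul, hμμ]

theorem petz_recovery_inverts_on_attractor_general
    (d N : ℕ) (A : Fin N → Mat d)
    (hKraus : ∑ k, (A k)ᴴ * A k = 1)
    (Φ : Module.End ℂ (Mat d))
    (hΦ : ∀ X : Mat d, Φ X = ∑ k, A k * X * (A k)ᴴ)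
    (σ s t : Mat d) (hfix : Φ σ = σ)
    (hs : s.PosDef) (hss : s * s = σ)
    (ht : t.PosDef) (hts : t * s = 1)
    (Ψ : Module.End ℂ (Mat d))
    (hΨ : ∀ X : Mat d, Ψ X = ∑ k, (s * (A k)ᴴ * t) * X * (t * A k * s)) :
    (∀ (μ : ℂ) (X : Mat d), ‖μ‖ = 1 → Φ X = μ • X →
      Ψ X = (starRingEnd ℂ μ) • X) ∧
    (∀ X ∈ attrSubspace Φ, Ψ (Φ X) = X ∧ Φ (Ψ X) = X) := by
  obtain rfl : Φ = krausMap A := LinearMap.ext hΦ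
  obtain rfl : Ψ = krausMap (petzKraus s t A) := LinearMap.ext fun X => by
    simp_rw [hΨ, krausMap_apply, petzKraus_conjTranspose hs.1 ht.1]
    rfl
  subst hss
  have hpetz : ∀ (μ : ℂ) (X : Mat d), ‖μ‖ = 1 → krausMap A X = μ • X →
      krausMap (petzKraus s t A) X = starRingEnd ℂ μ • X :=
    fun _ _ hμ hX => krausMap_petzKraus_apply_of_eigen hKraus hfix hs ht.1 hts hμ hX
  exact ⟨hpetz, fun X hX => by simpa using attrSubspace_le_eqLocus hpetz hX⟩

/-- Let `Φ(X) = ∑ₖ Aₖ X Aₖᴴ` be a faithful quantum channel with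
full-rank fixed state `σ` and Petz recovery map
`Ψ(X) = ∑ₖ σ^{1/2} Aₖᴴ σ^{-1/2} X σ^{-1/2} Aₖ σ^{1/2}`. Then every peripheral eigenvector
`X` of `Φ` (`Φ X = μ X`, `|μ| = 1`) satisfies `Ψ X = conj μ • X`; consequently
`Ψ (Φ X) = X = Φ (Ψ X)` for all `X ∈ Attr(Φ)`. -/
theorem petz_recovery_inverts_on_attractor
    (d N : ℕ) (A : Fin N → Mat d)
    (hKraus : ∑ k, (A k)ᴴ * A k = 1)
    (Φ : Module.End ℂ (Mat d))
    (hΦ : ∀ X : Mat d, Φ X = ∑ k, A k * X * (A k)ᴴ)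
    (σ s t : Mat d) (hσ : σ.PosDef) (hfix : Φ σ = σ)
    (hs : s.PosDef) (hss : s * s = σ)
    (ht : t.PosDef) (hts : t * s = 1)
    (Ψ : Module.End ℂ (Mat d))
    (hΨ : ∀ X : Mat d, Ψ X = ∑ k, (s * (A k)ᴴ * t) * X * (t * A k * s)) :
    (∀ (μ : ℂ) (X : Mat d), ‖μ‖ = 1 → Φ X = μ • X →
      Ψ X = (starRingEnd ℂ μ) • X) ∧
    (∀ X ∈ attrSubspace Φ, Ψ (Φ X) = X ∧ Φ (Ψ X) = X) :=
  petz_recovery_inverts_on_attractor_general d N A hKraus Φ hΦ σ s t hfix hs hss ht hts Ψ hΨ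
end
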